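/- Let g_1, g_2 be nonsingular upper triangular binary morphisms on X = {a,b} with g_1(a) = g_2(a) = a. If there are positive integers m, n such that g_1^n(b) and g_2^m(b) are a-conjugates, then g_1^n g_2^m = g_2^m g_1^n. -/

import Mathlib

/-- Words over the binary alphabet: `false` is the letter `a`, `true` is the letter `b`. -/
abbrev Word := List Bool

/-- The morphism of the free monoid determined by the images `g` of the letters. -/
def applyG (g : Bool → Word) (w : Word) : Word := w.flatMap g

/-- `a^n`. -/
def rep (n : ℕ) : Word := List.replicate n false

/-- `b a^{α 1} b a^{α 2} ⋯ b a^{α (p-1)} b`, a word with `p` occurrences of `b`. -/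
def blockWord (p : ℕ) (α : ℕ → ℕ) : Word :=
  ((List.range (p - 1)).flatMap fun i => true :: rep (α (i + 1))) ++ [true]

/-- `w^k`. -/
def wordPow (w : Word) (k : ℕ) : Word := (List.replicate k w).flatten

/-- `u` and `v` are `a`-conjugates. -/
def AConj (u v : Word) : Prop :=
  ∃ p q r s : ℕ, ∃ w : Word,
    u = rep p ++ w ++ rep q ∧ v = rep r ++ w ++ rep s ∧ p + q = r + s

/-- `w` is the infinite word `ω(g)`: for every `n`, the word obtained from `g^n(b)` by deleting
all occurrences of `a` preceding the first occurrence of `b` is a prefix of `w`. -/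
def IsOmega (g : Bool → Word) (w : ℕ → Bool) : Prop :=
  ∀ n k : ℕ, ∀ hk : k < (((applyG g)^[n] [true]).dropWhile (fun x => !x)).length,
    (((applyG g)^[n] [true]).dropWhile (fun x => !x)).get ⟨k, hk⟩ = w k

/-- `Aw w i` (for `i ≥ 1`): the number of occurrences of `a` in `w` strictly between the
`i`-th and `(i+1)`-th occurrences of `b` in `w`. -/
noncomputable def Aw (w : ℕ → Bool) (i : ℕ) : ℕ :=
  Nat.nth (fun n => w n = true) i - Nat.nth (fun n => w n = true) (i - 1) - 1

/-! Both iterates are morphisms fixing `a`, so they commute as soon as `g₁^n ∘ g₂^m` and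
`g₂^m ∘ g₁^n` agree on `b`. Writing `g₁^n(b) = a^p w a^q` and `g₂^m(b) = a^r w a^s`, in
`a^r g₁^n(u) a^s` and `a^p g₂^m(u) a^q` every `b` of `u` becomes a copy of `w`, and the runs of
`a` between consecutive copies agree because `p + q = r + s`. -/

section Morphism

variable (f g : Bool → Word)

lemma applyG_append (x y : Word) : applyG g (x ++ y) = applyG g x ++ applyG g y := by
  simp [applyG]

lemma applyG_applyG (w : Word) : applyG f (applyG g w) = applyG (fun c => applyG f (g c)) w := by
  simp [applyG, List.flatMap_assoc]

lemma iterate_applyG (n : ℕ) : (applyG g)^[n] = applyG (fun c => (applyG g)^[n] [c]) := by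
  induction n with
  | zero => funext w; simp [applyG]
  | succ n ih =>
    funext w
    rw [Function.iterate_succ_apply, ih, applyG_applyG]
    congr 1
    funext c
    rw [Function.iterate_succ_apply, ih]
    simp [applyG]

variable {f g}

lemma rep_add (x y : ℕ) : rep (x + y) = rep x ++ rep y := List.replicate_add x y false

lemma applyG_rep (hf : f false = [false]) (k : ℕ) : applyG f (rep k) = rep k := by
  induction k with
  | zero => rfl
  | succ k ih => rw [rep_add, applyG_append, ih]; simp [applyG, rep, hf]

lemma iterate_applyG_singleton_false (hg : g false = [false]) (n : ℕ) :
    (applyG g)^[n] [false] = [false] :=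
  Function.iterate_fixed (by simp [applyG, hg]) n

lemma rep_append_applyG_eq (hf : f false = [false]) (hg : g false = [false])
    {p q r s : ℕ} {w : Word} (hfb : f true = rep p ++ w ++ rep q)
    (hgb : g true = rep r ++ w ++ rep s) (hpq : p + q = r + s) (u : Word) {x z : ℕ}
    (h : x + s = z + q) : rep x ++ applyG f u ++ rep s = rep z ++ applyG g u ++ rep q := by
  induction u generalizing x z with
  | nil => simp [applyG, ← rep_add, h]
  | cons c u ih =>
    have hcons : ∀ h : Bool → Word, applyG h (c :: u) = h c ++ applyG h u := fun _ => rfl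
    rw [hcons, hcons]
    cases c with
    | false =>
      have := @ih (x + 1) (z + 1) (by omega)
      simpa [hf, hg, rep, List.replicate_succ', List.append_assoc] using this
    | true =>
      have hxz : x + p = z + r := by omega
      have hrest := @ih q s (by omega)
      calc rep x ++ (f true ++ applyG f u) ++ rep s
          = rep (x + p) ++ (w ++ (rep q ++ applyG f u ++ rep s)) := by
            rw [hfb, rep_add]; simp only [List.append_assoc]
        _ = rep (z + r) ++ (w ++ (rep s ++ applyG g u ++ rep q)) := by rw [hxz, hrest]
        _ = rep z ++ (g true ++ applyG g u) ++ rep q := by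
            rw [hgb, rep_add]; simp only [List.append_assoc]

theorem applyG_comm_of_aConj (hf : f false = [false]) (hg : g false = [false])
    (hconj : AConj (f true) (g true)) : applyG f ∘ applyG g = applyG g ∘ applyG f := by
  obtain ⟨p, q, r, s, w, hfb, hgb, hpq⟩ := hconj
  funext u
  simp only [Function.comp_apply, applyG_applyG]
  congr 1
  funext c
  cases c with
  | false => simp [applyG, hf, hg]
  | true =>
    rw [hgb, hfb, applyG_append, applyG_append, applyG_append, applyG_append,
      applyG_rep hf, applyG_rep hf, applyG_rep hg, applyG_rep hg]
    exact rep_append_applyG_eq hf hg hfb hgb hpq w (by omega)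

end Morphism

theorem stmt19_general (g₁ g₂ : Bool → Word)
    (h₁a : g₁ false = [false]) (h₂a : g₂ false = [false])
    (m n : ℕ)
    (hconj : AConj ((applyG g₁)^[n] [true]) ((applyG g₂)^[m] [true])) :
    (applyG g₁)^[n] ∘ (applyG g₂)^[m] = (applyG g₂)^[m] ∘ (applyG g₁)^[n] := by
  rw [iterate_applyG g₁ n, iterate_applyG g₂ m]
  exact applyG_comm_of_aConj (iterate_applyG_singleton_false h₁a n)
    (iterate_applyG_singleton_false h₂a m) hconj

/-- for nonsingular upper triangular `g₁`, `g₂` with `g₁(a)=g₂(a)=a`, if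
`g₁^n(b)` and `g₂^m(b)` are `a`-conjugates for some positive `m`, `n`, then `g₁^n` and
`g₂^m` commute. -/
theorem stmt19 (g₁ g₂ : Bool → Word)
    (h₁a : g₁ false = [false]) (h₂a : g₂ false = [false])
    (h₁ns : 0 < (g₁ true).count true) (h₂ns : 0 < (g₂ true).count true)
    (m n : ℕ) (hm : 0 < m) (hn : 0 < n)
    (hconj : AConj ((applyG g₁)^[n] [true]) ((applyG g₂)^[m] [true])) :
    (applyG g₁)^[n] ∘ (applyG g₂)^[m] = (applyG g₂)^[m] ∘ (applyG g₁)^[n] :=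
  stmt19_general g₁ g₂ h₁a h₂a m n hconj
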